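/- For every θ ∈ ℚ ∪ {∞} there exists a tiling system τ with Sl_τ = {θ}. -/

import Mathlib

/-- A finite pattern: a finite support in `ℤ²` together with tile data. -/
structure Pattern (T : Type) where
  support : Finset (ℤ × ℤ)
  data : ℤ × ℤ → T

/-- A tiling system: a finite set of finite forbidden patterns over the tile set `T`. -/
structure TilingSystem (T : Type) where
  F : Set (Pattern T)
  finite : F.Finite

/-- A tiling is valid when no translate of a forbidden pattern appears in it. -/
def TilingSystem.Valid {T : Type} (τ : TilingSystem T) (c : ℤ × ℤ → T) : Prop :=
  ∀ p ∈ τ.F, ∀ u : ℤ × ℤ, ∃ n ∈ p.support, c (n + u) ≠ p.data n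

/-- A vector `v` is a period of the tiling `c`. -/
def IsPeriod {T : Type} (c : ℤ × ℤ → T) (v : ℤ × ℤ) : Prop :=
  ∀ x : ℤ × ℤ, c (x + v) = c x

/-- The direction of a vector of `ℤ²`, an element of `ℚ ∪ {∞}` modelled as `Option ℚ`
(`none` being `∞`, obtained when the first coordinate vanishes). -/
def dir (v : ℤ × ℤ) : Option ℚ :=
  if v.1 = 0 then none else some ((v.2 : ℚ) / (v.1 : ℚ))

/-- A tiling has slope `θ` when it has a nonzero period and all its nonzero
periods have direction `θ`. -/
def HasSlope {T : Type} (c : ℤ × ℤ → T) (θ : Option ℚ) : Prop :=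
  (∃ v : ℤ × ℤ, v ≠ 0 ∧ IsPeriod c v ∧ dir v = θ) ∧
    ∀ v : ℤ × ℤ, v ≠ 0 → IsPeriod c v → dir v = θ

/-- The set of slopes of all valid tilings of a tiling system. -/
def TilingSystem.Slopes {T : Type} (τ : TilingSystem T) : Set (Option ℚ) :=
  {θ : Option ℚ | ∃ c : ℤ × ℤ → T, τ.Valid c ∧ HasSlope c θ}


/-!
Fix a primitive vector `v` with direction `θ`. Forbidding two different tiles at positions
`x` and `x + v` makes the valid tilings exactly the `v`-periodic ones, so every valid tiling
that has a slope has slope `θ`. The half-plane tiling `x ↦ [0 ≤ v × x]` is valid, and since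
`v` is primitive the cross product `v × ·` is onto `ℤ`, which forces each period `u` of it to
satisfy `v × u = 0`, i.e. to be an integer multiple of `v`: its slope is `θ`.
-/

lemma dir_smul {t : ℤ} (ht : t ≠ 0) (v : ℤ × ℤ) : dir (t • v) = dir v := by
  by_cases hv : v.1 = 0
  · simp [dir, hv]
  · have ht' : (t : ℚ) ≠ 0 := by exact_mod_cast ht
    simp [dir, hv, ht, mul_div_mul_left _ _ ht']

lemma exists_isCoprime_dir_eq (θ : Option ℚ) :
    ∃ v : ℤ × ℤ, IsCoprime v.1 v.2 ∧ dir v = θ := by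
  cases θ with
  | none => exact ⟨(0, 1), isCoprime_zero_left.mpr isUnit_one, by simp [dir]⟩
  | some r =>
    exact ⟨(r.den, r.num), (Rat.isCoprime_num_den r).symm,
      by simp [dir, r.den_nz, Rat.num_div_den]⟩

lemma ne_zero_of_isCoprime_fst_snd {v : ℤ × ℤ} (hv : IsCoprime v.1 v.2) : v ≠ 0 := by
  rintro rfl
  exact not_isCoprime_zero_zero hv

section Periodic

variable {T : Type}

def mismatchPattern (v : ℤ × ℤ) (a b : T) : Pattern T :=
  ⟨{0, v}, fun n => if n = 0 then a else b⟩

def periodSystem [Finite T] (v : ℤ × ℤ) : TilingSystem T :=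
  ⟨Set.range fun ab : {ab : T × T // ab.1 ≠ ab.2} => mismatchPattern v ab.1.1 ab.1.2,
    Set.finite_range _⟩

lemma avoids_mismatchPattern_iff {v : ℤ × ℤ} (hv : v ≠ 0) (c : ℤ × ℤ → T) (a b : T)
    (u : ℤ × ℤ) :
    (∃ n ∈ (mismatchPattern v a b).support, c (n + u) ≠ (mismatchPattern v a b).data n) ↔
      c u ≠ a ∨ c (u + v) ≠ b := by
  simp [mismatchPattern, hv, add_comm]

lemma valid_periodSystem_iff [Finite T] {v : ℤ × ℤ} (hv : v ≠ 0) (c : ℤ × ℤ → T) :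
    (periodSystem v).Valid c ↔ IsPeriod c v := by
  simp only [TilingSystem.Valid, periodSystem, Set.forall_mem_range, Subtype.forall,
    avoids_mismatchPattern_iff hv, IsPeriod]
  constructor
  · intro H x
    by_contra hx
    simpa using H (c x, c (x + v)) (Ne.symm hx) x
  · intro H ab hab u
    by_contra! h
    exact hab (h.1 ▸ h.2 ▸ (H u).symm)

end Periodic

section HalfPlane

def cross (v x : ℤ × ℤ) : ℤ := v.1 * x.2 - v.2 * x.1

lemma cross_add (v x u : ℤ × ℤ) : cross v (x + u) = cross v x + cross v u := by
  simp only [cross, Prod.fst_add, Prod.snd_add]; ring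

lemma cross_self_eq_zero (v : ℤ × ℤ) : cross v v = 0 := by
  simp only [cross, mul_comm, sub_self]

variable {v : ℤ × ℤ}

lemma IsCoprime.exists_cross_eq (hv : IsCoprime v.1 v.2) (m : ℤ) : ∃ x, cross v x = m := by
  obtain ⟨a, b, hab⟩ := hv
  exact ⟨(-(m * b), m * a), by simp only [cross]; linear_combination m * hab⟩

lemma IsCoprime.exists_eq_smul_of_cross_eq_zero (hv : IsCoprime v.1 v.2) {u : ℤ × ℤ}
    (hu : cross v u = 0) : ∃ t : ℤ, u = t • v := by
  obtain ⟨a, b, hab⟩ := hv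
  refine ⟨a * u.1 + b * u.2, Prod.ext ?_ ?_⟩ <;>
    simp only [cross, Prod.smul_fst, Prod.smul_snd, smul_eq_mul] at hu ⊢
  · linear_combination -b * hu - u.1 * hab
  · linear_combination a * hu - u.2 * hab

def halfPlane (v : ℤ × ℤ) (x : ℤ × ℤ) : Fin 2 :=
  if 0 ≤ cross v x then 1 else 0

lemma isPeriod_halfPlane_iff (hv : IsCoprime v.1 v.2) (u : ℤ × ℤ) :
    IsPeriod (halfPlane v) u ↔ cross v u = 0 := by
  constructor
  · intro hu
    have hshift (m : ℤ) : (0 ≤ m + cross v u) ↔ 0 ≤ m := by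
      obtain ⟨x, hx⟩ := hv.exists_cross_eq m
      have := hu x
      simp only [halfPlane, cross_add, hx] at this
      split_ifs at this <;> omega
    have h₁ := (hshift (-cross v u)).mp (by omega)
    have h₂ := (hshift (-cross v u - 1)).not.mp (by omega)
    omega
  · intro hu x
    simp only [halfPlane, cross_add, hu, add_zero]

lemma isPeriod_halfPlane_self (v : ℤ × ℤ) : IsPeriod (halfPlane v) v := by
  intro x
  simp only [halfPlane, cross_add, cross_self_eq_zero, add_zero]

lemma hasSlope_halfPlane (hv : IsCoprime v.1 v.2) : HasSlope (halfPlane v) (dir v) := by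
  refine ⟨⟨v, ne_zero_of_isCoprime_fst_snd hv, isPeriod_halfPlane_self v, rfl⟩,
    fun u hu₀ hu => ?_⟩
  obtain ⟨t, rfl⟩ := hv.exists_eq_smul_of_cross_eq_zero ((isPeriod_halfPlane_iff hv u).mp hu)
  exact dir_smul (by rintro rfl; simp at hu₀) v

end HalfPlane

lemma slopes_periodSystem {v : ℤ × ℤ} (hv : IsCoprime v.1 v.2) :
    (periodSystem v : TilingSystem (Fin 2)).Slopes = {dir v} := by
  have hv₀ := ne_zero_of_isCoprime_fst_snd hv
  ext θ
  constructor
  · rintro ⟨c, hc, hθ⟩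
    exact (hθ.2 v hv₀ ((valid_periodSystem_iff hv₀ c).mp hc)).symm
  · rintro rfl
    exact ⟨halfPlane v, (valid_periodSystem_iff hv₀ _).mpr (isPeriod_halfPlane_self v),
      hasSlope_halfPlane hv⟩

/-- For every `θ ∈ ℚ ∪ {∞}` there is a tiling system whose set of slopes is `{θ}`. -/
theorem singleton_slope (θ : Option ℚ) :
    ∃ (N : ℕ) (τ : TilingSystem (Fin N)), τ.Slopes = {θ} := by
  obtain ⟨v, hv, rfl⟩ := exists_isCoprime_dir_eq θ
  exact ⟨2, periodSystem v, slopes_periodSystem hv⟩
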